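/- arXiv:1506.07663 — 8 statements merged into one kernel-verified Lean document; each statement's English description precedes it below -/
import Mathlib

section
/- Let (X,d) be a compact metric space, f : X → X continuous, and ε > 0. Choose δ > 0 with δ < ε/2 such that d(x,y) ≤ δ implies d(f(x),f(y)) < ε/2. Let 𝒰 be a finite covering of X by sets each of diameter less than δ. Let g : X → X be a mapping such that for all U, U' ∈ 𝒰, if g(U) ∩ U' ≠ ∅ then f(U) ∩ U' ≠ ∅. Then sup_{x ∈ X} d(f(x), g(x)) < ε. -/
/-- If `𝒰` is a finite covering of mesh `< δ` (with `δ` a modulus of uniform continuity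
for `f` at scale `ε/2`, `δ < ε/2`) and the transition graph of `g` is a subgraph of the
transition graph of `f`, then `sup_x d(f x, g x) < ε`. -/
theorem stmt_1 {X : Type*} [MetricSpace X] [CompactSpace X]
    (f : X → X) (hf : Continuous f) (ε δ : ℝ) (hε : 0 < ε)
    (hδpos : 0 < δ) (hδ : δ < ε / 2)
    (hmod : ∀ x y : X, dist x y ≤ δ → dist (f x) (f y) < ε / 2)
    {ι : Type*} [Fintype ι] (U : ι → Set X)
    (hcover : ∀ x : X, ∃ i, x ∈ U i)
    (hdiam : ∀ i, Metric.diam (U i) < δ)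
    (g : X → X)
    (hsub : ∀ i j : ι, (g '' U i ∩ U j).Nonempty → (f '' U i ∩ U j).Nonempty) :
    ∃ c : ℝ, c < ε ∧ ∀ x : X, dist (f x) (g x) ≤ c := by
  rcases isEmpty_or_nonempty X with hX | hX
  · exact ⟨ε / 2, by linarith, fun x => (IsEmpty.false x).elim⟩
  · obtain ⟨x₀⟩ := hX
    obtain ⟨i₀, _⟩ := hcover x₀
    have hne : (Finset.univ : Finset ι).Nonempty := ⟨i₀, Finset.mem_univ _⟩
    set D := Finset.univ.sup' hne (fun i => Metric.diam (U i)) with hD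
    have hDδ : D < δ := (Finset.sup'_lt_iff hne).2 fun i _ => hdiam i
    refine ⟨ε / 2 + D, by linarith, fun x => ?_⟩
    obtain ⟨i, hxi⟩ := hcover x
    obtain ⟨j, hgj⟩ := hcover (g x)
    obtain ⟨z, ⟨y, hyi, hfy⟩, hzj⟩ := hsub i j ⟨g x, ⟨x, hxi, rfl⟩, hgj⟩
    subst hfy
    have h1 : dist (f x) (f y) < ε / 2 :=
      hmod x y ((Metric.dist_le_diam_of_mem (Metric.isBounded_of_compactSpace.subset
        (Set.subset_univ _)) hxi hyi).trans (hdiam i).le)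
    have h2 : dist (f y) (g x) ≤ D :=
      (Metric.dist_le_diam_of_mem (Metric.isBounded_of_compactSpace.subset
        (Set.subset_univ _)) hzj hgj).trans (Finset.le_sup' (fun i => Metric.diam (U i)) (Finset.mem_univ j))
    calc dist (f x) (g x) ≤ dist (f x) (f y) + dist (f y) (g x) := dist_triangle _ _ _
      _ ≤ ε / 2 + D := by linarith
end

section
/- Let (X,d) be a compact metric space, f : X → X continuous, and {𝒰_k} a sequence of finite coverings of X with mesh(𝒰_k) → 0 as k → ∞. Let {g_k} be mappings X → X such that for each k and all U, U' ∈ 𝒰_k, g_k(U) ∩ U' ≠ ∅ implies f(U) ∩ U' ≠ ∅. Then g_k converges uniformly to f. -/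
open Filter

/-- If `𝒰_k` are finite coverings with mesh tending to `0` and each transition graph
`G(g_k, 𝒰_k)` is a subgraph of `G(f, 𝒰_k)`, then `g_k → f` uniformly. -/
theorem stmt_2 {X : Type*} [MetricSpace X] [CompactSpace X]
    (f : X → X) (hf : Continuous f)
    {ι : ℕ → Type*} [∀ k, Fintype (ι k)] (U : ∀ k, ι k → Set X)
    (hcover : ∀ k, ∀ x : X, ∃ i, x ∈ U k i)
    (hmesh : ∀ ε : ℝ, 0 < ε → ∃ K : ℕ, ∀ k ≥ K, ∀ i, Metric.diam (U k i) < ε)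
    (g : ℕ → X → X)
    (hsub : ∀ k, ∀ i j : ι k,
      (g k '' U k i ∩ U k j).Nonempty → (f '' U k i ∩ U k j).Nonempty) :
    TendstoUniformly g f atTop := by
  rw [Metric.tendstoUniformly_iff]
  intro ε hε
  -- uniform continuity of f on the compact space
  obtain ⟨δ, hδ, hδf⟩ := Metric.uniformContinuous_iff.mp
    (CompactSpace.uniformContinuous_of_continuous hf) (ε / 4) (by linarith)
  obtain ⟨K, hK⟩ := hmesh (min δ (ε / 4)) (lt_min hδ (by linarith))
  refine eventually_atTop.mpr ⟨K, fun k hk x => ?_⟩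
  obtain ⟨i, hi⟩ := hcover k x
  obtain ⟨j, hj⟩ := hcover k (g k x)
  obtain ⟨z, ⟨y, hy, hyz⟩, hzj⟩ := hsub k i j ⟨g k x, ⟨x, hi, rfl⟩, hj⟩
  have hbdd : ∀ s : Set X, Bornology.IsBounded s :=
    fun s => (isCompact_univ.isBounded).subset (Set.subset_univ s)
  have h1 : dist (g k x) z ≤ Metric.diam (U k j) :=
    Metric.dist_le_diam_of_mem (hbdd _) hj hzj
  have h2 : dist x y ≤ Metric.diam (U k i) :=
    Metric.dist_le_diam_of_mem (hbdd _) hi hy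
  have hdj := hK k hk j
  have hdi := hK k hk i
  have h3 : dist (f x) (f y) < ε / 4 := hδf (lt_of_le_of_lt h2 (lt_of_lt_of_le hdi (min_le_left _ _)))
  calc dist (f x) (g k x) ≤ dist (f x) (f y) + dist (f y) (g k x) := dist_triangle _ _ _
    _ = dist (f x) (f y) + dist (g k x) z := by rw [hyz, dist_comm z (g k x)]
    _ < ε / 4 + min δ (ε / 4) := by
        exact add_lt_add h3 (lt_of_le_of_lt h1 hdj)
    _ ≤ ε / 4 + ε / 4 := by gcongr; exact min_le_right _ _
    _ < ε := by linarith
end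

section
/- Let X be a Cantor space, f : X → X a continuous surjection, and 𝒰 a finite partition of X by nonempty clopen sets. If f has a periodic point of period n, then the vertex shift Σ(f,𝒰) of the directed graph G(f,𝒰) has a periodic point of period n. Consequently Per(X,f) ⊆ Per(Σ(f,𝒰), σ). -/
/-- If `f` has a periodic point of period `n`, then the vertex shift `Σ(f,𝒰)`
of the transition graph `G(f,𝒰)` has a periodic point of period `n`;
hence `Per(X,f) ⊆ Per(Σ(f,𝒰),σ)`. -/
theorem stmt_3 {X : Type*} [MetricSpace X] [CompactSpace X] [PerfectSpace X]
    [TotallyDisconnectedSpace X] [Nonempty X]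
    (f : X → X) (hf : Continuous f) (hsurj : Function.Surjective f)
    {ι : Type*} [Fintype ι] (U : ι → Set X)
    (hne : ∀ i, (U i).Nonempty) (hclopen : ∀ i, IsClopen (U i))
    (hdisj : ∀ i j, i ≠ j → Disjoint (U i) (U j))
    (hcover : ∀ x : X, ∃ i, x ∈ U i) :
    ∀ n : ℕ, 1 ≤ n → (∃ x : X, f^[n] x = x) →
      ∃ t : ℤ → ι, (∀ m : ℤ, (f '' U (t m) ∩ U (t (m + 1))).Nonempty) ∧
        (∀ m : ℤ, t (m + n) = t m) := by
  classical
  rintro n hn ⟨x, hx⟩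
  have hnpos : 0 < n := hn
  have hfix : ∀ q : ℕ, f^[n * q] x = x := by
    intro q
    rw [Function.iterate_mul]
    exact Function.IsFixedPt.iterate hx q
  have hper : ∀ a : ℕ, f^[a % n] x = f^[a] x := by
    intro a
    conv_rhs => rw [← Nat.mod_add_div a n]
    rw [Function.iterate_add_apply, hfix]
  set c : ℕ → ι := fun k => (hcover (f^[k] x)).choose with hc
  have hcspec : ∀ k : ℕ, f^[k] x ∈ U (c k) := fun k => (hcover (f^[k] x)).choose_spec
  refine ⟨fun m => c (m % (n : ℤ)).toNat, ?_, ?_⟩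
  · intro m
    set k : ℕ := (m % (n : ℤ)).toNat with hk
    have h1 : m % (n : ℤ) = (k : ℤ) := by
      rw [hk, Int.toNat_of_nonneg (Int.emod_nonneg m (by exact_mod_cast hnpos.ne'))]
    have h2 : m + 1 = ((k : ℤ) + 1) + n * (m / n) := by
      rw [← h1]
      have := Int.emod_add_mul_ediv m n
      linarith
    have hmod : (m + 1) % (n : ℤ) = (((k + 1) % n : ℕ) : ℤ) := by
      push_cast
      rw [h2, Int.add_mul_emod_self_left]
    refine ⟨f^[k + 1] x, ⟨f^[k] x, hcspec k, ?_⟩, ?_⟩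
    · rw [Function.iterate_succ_apply']
    · show f^[k + 1] x ∈ U (c ((m + 1) % (n : ℤ)).toNat)
      rw [hmod, Int.toNat_natCast]
      have := hcspec ((k + 1) % n)
      rwa [hper (k + 1)] at this
  · intro m
    show c ((m + (n : ℤ)) % (n : ℤ)).toNat = c (m % (n : ℤ)).toNat
    have h3 := Int.add_mul_emod_self_left (a := m) (b := (n : ℤ)) (c := 1)
    rw [mul_one] at h3
    rw [h3]
end

section
/- Let X be a Cantor space and f : X → X a chain mixing continuous surjection. Let 𝒰 be a nontrivial finite partition of X by nonempty clopen sets. Then the vertex shift Σ(f,𝒰) associated to the graph G(f,𝒰) is topologically mixing. -/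
variable {V : Type*}

/-- The vertex shift of a directed graph with edge relation `E`. -/
def vertexShift (E : V → V → Prop) : Set (ℤ → V) :=
  {t | ∀ i : ℤ, E (t i) (t (i + 1))}

/-- The shift map on the vertex shift. -/
def shiftMap (E : V → V → Prop) : vertexShift E → vertexShift E :=
  fun t => ⟨fun i => t.1 (i + 1), fun i => t.2 (i + 1)⟩

/-- `f` is chain mixing: for every `δ > 0` and all `x, y` there is `N` such that for
every `n ≥ N` there is a `δ`-chain from `x` to `y` of length `n`. -/
def ChainMixing {X : Type*} [MetricSpace X] (f : X → X) : Prop :=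
  ∀ δ : ℝ, 0 < δ → ∀ x y : X, ∃ N : ℕ, ∀ n ≥ N,
    ∃ c : ℕ → X, c 0 = x ∧ c n = y ∧ ∀ i < n, dist (f (c i)) (c (i + 1)) < δ

lemma shiftMap_iterate {E : V → V → Prop} (n : ℕ) (t : vertexShift E) (i : ℤ) :
    (((shiftMap E)^[n]) t).1 i = t.1 (i + n) := by
  induction n generalizing t with
  | zero => simp
  | succ n ih =>
    rw [Function.iterate_succ_apply, ih]
    show t.1 (i + n + 1) = t.1 (i + (n + 1))
    congr 1
    push_cast
    ring

/-- Open sets in the vertex shift contain a cylinder around each of their points. -/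
lemma window_lemma {E : V → V → Prop} [TopologicalSpace V] [DiscreteTopology V]
    (A : Set (vertexShift E)) (hA : IsOpen A) (a : vertexShift E) (ha : a ∈ A) :
    ∃ k : ℕ, ∀ t : vertexShift E, (∀ i : ℤ, i.natAbs ≤ k → t.1 i = a.1 i) → t ∈ A := by
  obtain ⟨W, hW, rfl⟩ := isOpen_induced_iff.mp hA
  obtain ⟨I, u, hu, hsub⟩ := isOpen_pi_iff.mp hW a.1 ha
  refine ⟨I.sup Int.natAbs, fun t ht => ?_⟩
  apply hsub
  intro i hi
  rw [ht i (Finset.le_sup hi)]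
  exact (hu i hi).2

/-- For a chain mixing continuous surjection `f` of a Cantor space and a nontrivial
finite clopen partition `𝒰`, the vertex shift `Σ(f,𝒰)` is topologically mixing. -/
theorem stmt_6 {X : Type*} [MetricSpace X] [CompactSpace X] [PerfectSpace X]
    [TotallyDisconnectedSpace X] [Nonempty X]
    (f : X → X) (hf : Continuous f) (hsurj : Function.Surjective f)
    (hcm : ChainMixing f)
    {ι : Type*} [Fintype ι] [TopologicalSpace ι] [DiscreteTopology ι]
    (U : ι → Set X)
    (hne : ∀ i, (U i).Nonempty) (hclopen : ∀ i, IsClopen (U i))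
    (hdisj : ∀ i j, i ≠ j → Disjoint (U i) (U j))
    (hcover : ∀ x : X, ∃ i, x ∈ U i)
    (hnontriv : ∃ i j : ι, i ≠ j) :
    ∀ A B : Set (vertexShift (fun i j : ι => (f '' U i ∩ U j).Nonempty)),
      IsOpen A → IsOpen B → A.Nonempty → B.Nonempty →
      ∃ N : ℕ, ∀ n ≥ N,
        ((shiftMap (fun i j : ι => (f '' U i ∩ U j).Nonempty))^[n] '' A ∩ B).Nonempty := by
  classical
  set E : ι → ι → Prop := fun i j => (f '' U i ∩ U j).Nonempty with hE
  -- the index of the partition element containing a point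
  choose idx hidx using hcover
  have idx_eq : ∀ x i, x ∈ U i → idx x = i := by
    intro x i hxi
    by_contra h
    exact Set.disjoint_left.mp (hdisj _ _ h) (hidx x) hxi
  -- Lebesgue number
  obtain ⟨δ, hδ, hleb⟩ := lebesgue_number_lemma_of_metric (s := (Set.univ : Set X))
    isCompact_univ (fun i => (hclopen i).2) (fun x _ => Set.mem_iUnion.mpr (⟨idx x, hidx x⟩))
  -- points within δ are in the same partition element
  have same : ∀ x y : X, dist x y < δ → idx x = idx y := by
    intro x y hxy
    obtain ⟨i, hball⟩ := hleb y (Set.mem_univ y)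
    have hx : x ∈ U i := hball (by rwa [Metric.mem_ball])
    have hy : y ∈ U i := hball (Metric.mem_ball_self hδ)
    rw [idx_eq x i hx, idx_eq y i hy]
  -- graph paths of all long enough lengths between any two vertices
  have path : ∀ u v : ι, ∃ N₀ : ℕ, ∀ m ≥ N₀, ∃ p : ℕ → ι,
      p 0 = u ∧ p m = v ∧ ∀ t < m, E (p t) (p (t + 1)) := by
    intro u v
    obtain ⟨x, hx⟩ := hne u
    obtain ⟨y, hy⟩ := hne v
    obtain ⟨N₀, hN₀⟩ := hcm δ hδ x y
    refine ⟨N₀, fun m hm => ?_⟩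
    obtain ⟨c, hc0, hcmv, hchain⟩ := hN₀ m hm
    refine ⟨fun t => idx (c t), ?_, ?_, fun t ht => ?_⟩
    · show idx (c 0) = u
      rw [hc0]; exact idx_eq x u hx
    · show idx (c m) = v
      rw [hcmv]; exact idx_eq y v hy
    · have h1 : idx (f (c t)) = idx (c (t + 1)) := same _ _ (hchain t ht)
      refine ⟨f (c t), ⟨c t, hidx (c t), rfl⟩, ?_⟩
      show f (c t) ∈ U (idx (c (t + 1)))
      rw [← h1]; exact hidx (f (c t))
  intro A B hAopen hBopen ⟨a, ha⟩ ⟨b, hb⟩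
  obtain ⟨ka, hka⟩ := window_lemma A hAopen a ha
  obtain ⟨kb, hkb⟩ := window_lemma B hBopen b hb
  set k : ℕ := max ka kb with hk
  obtain ⟨N₀, hN₀⟩ := path (a.1 k) (b.1 (-(k : ℤ)))
  refine ⟨2 * k + max N₀ 1, fun n hn => ?_⟩
  have hn1 : 2 * k + 1 ≤ n := le_trans (add_le_add_right (le_max_right N₀ 1) _) hn
  have hnN : 2 * k + N₀ ≤ n := le_trans (add_le_add_right (le_max_left N₀ 1) _) hn
  obtain ⟨m, hm1, hmN, hnm⟩ : ∃ m : ℕ, 1 ≤ m ∧ N₀ ≤ m ∧ n = 2 * k + m :=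
    ⟨n - 2 * k, by omega, by omega, by omega⟩
  obtain ⟨p, hp0, hpm, hpE⟩ := hN₀ m hmN
  -- spliced sequence
  set s : ℤ → ι := fun i =>
    if i ≤ (k : ℤ) then a.1 i
    else if i < (k : ℤ) + m then p (i - k).toNat
    else b.1 (i - n) with hs
  have hs1 : ∀ i : ℤ, i ≤ (k : ℤ) → s i = a.1 i := fun i hi => if_pos hi
  have hs2 : ∀ t : ℕ, t ≤ m → s ((k : ℤ) + t) = p t := by
    intro t htm
    rcases Nat.eq_zero_or_pos t with rfl | htpos
    · simp only [hs, Nat.cast_zero, add_zero, if_pos le_rfl]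
      rw [hp0]
    · have h1 : ¬ ((k : ℤ) + t ≤ (k : ℤ)) := by push_cast; omega
      by_cases h2 : (k : ℤ) + t < (k : ℤ) + m
      · simp only [hs, if_neg h1, if_pos h2]
        have harg : ((k : ℤ) + t - k).toNat = t := by omega
        rw [harg]
      · have htm' : t = m := by omega
        simp only [hs, if_neg h1, if_neg h2]
        rw [htm', hpm]
        have harg : (k : ℤ) + m - n = -(k : ℤ) := by omega
        rw [harg]
  have hs3 : ∀ i : ℤ, (k : ℤ) + m ≤ i → s i = b.1 (i - n) := by
    intro i hi
    have h1 : ¬ (i ≤ (k : ℤ)) := by omega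
    have h2 : ¬ (i < (k : ℤ) + m) := by omega
    simp only [hs, if_neg h1, if_neg h2]
  have hsmem : s ∈ vertexShift E := by
    intro i
    rcases le_or_gt (i + 1) (k : ℤ) with h | h
    · rw [hs1 i (by omega), hs1 (i + 1) h]
      exact a.2 i
    rcases lt_or_ge i ((k : ℤ) + m) with h2 | h2
    · have hik : (k : ℤ) ≤ i := by omega
      set t := (i - k).toNat with htdef
      have hit : i = (k : ℤ) + t := by omega
      have htm : t < m := by omega
      rw [hit, show (k : ℤ) + t + 1 = (k : ℤ) + ((t + 1 : ℕ) : ℤ) by push_cast; ring,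
        hs2 t (le_of_lt htm), hs2 (t + 1) htm]
      exact hpE t htm
    · rw [hs3 i h2, hs3 (i + 1) (by omega), show i + 1 - n = i - n + 1 by ring]
      exact b.2 (i - n)
  have hkak : ka ≤ k := le_max_left _ _
  have hkbk : kb ≤ k := le_max_right _ _
  set T : vertexShift E := ⟨s, hsmem⟩ with hT
  have hTA : T ∈ A := hka T (fun i hi => hs1 i (by omega))
  have hTB : (shiftMap E)^[n] T ∈ B := by
    apply hkb
    intro i hi
    rw [shiftMap_iterate]
    show s (i + n) = b.1 i
    rw [hs3 (i + n) (by omega)]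
    congr 1
    ring
  exact ⟨(shiftMap E)^[n] T, ⟨T, hTA, rfl⟩, hTB⟩
end

section
/- Let (X₁,f₁), (X₂,f₂) be topological dynamical systems on Cantor spaces. Let {𝒰_k} be finite partitions of X₁ by nonempty clopen sets with mesh(𝒰_k) → 0, and let {π_k} be continuous maps X₂ → X₁ with π_k ∘ f₂ = f₁ ∘ π_k, such that for each k, π_k(X₂) ∩ U ≠ ∅ for all U ∈ 𝒰_k. Then there exists a sequence of homeomorphisms ψ_k : X₂ → X₁ such that ψ_k ∘ f₂ ∘ ψ_k⁻¹ converges uniformly to f₁. -/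
set_option linter.unusedSectionVars false
set_option linter.unusedVariables false

open Set Metric Filter Topology

/-- `C` is a partition of `A` into `n` nonempty clopen pieces of diameter `< ε`. -/
def IsPartn {X : Type*} [MetricSpace X] (A : Set X) (ε : ℝ) {n : ℕ} (C : Fin n → Set X) : Prop :=
  (∀ i, IsClopen (C i)) ∧ (∀ i, (C i).Nonempty) ∧ (∀ i, Metric.diam (C i) < ε) ∧
  (∀ i j, i ≠ j → Disjoint (C i) (C j)) ∧ (⋃ i, C i) = A

section Basic

variable {X : Type*} [MetricSpace X] [CompactSpace X] [TotallyDisconnectedSpace X]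

lemma split_two [PerfectSpace X] {A : Set X} (hA : IsClopen A) (hne : A.Nonempty) :
    ∃ B C : Set X, IsClopen B ∧ IsClopen C ∧ B.Nonempty ∧ C.Nonempty ∧ Disjoint B C ∧
      B ∪ C = A := by
  obtain ⟨x, hx⟩ := hne
  have hnb : (𝓝[≠] x).NeBot := PerfectSpace.not_isolated x
  have hAx : A ∈ 𝓝 x := hA.2.mem_nhds hx
  have hmem : (A \ {x}) ∈ 𝓝[≠] x := by
    rw [diff_eq, Set.inter_comm]
    exact inter_mem_nhdsWithin _ hAx
  obtain ⟨y, hy⟩ := hnb.nonempty_of_mem hmem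
  have hyA : y ∈ A := hy.1
  have hyx : y ≠ x := hy.2
  obtain ⟨V, hV, hxV, hVsub⟩ := compact_exists_isClopen_in_isOpen
    (hA.2.sdiff isClosed_singleton) (show x ∈ A \ {y} from ⟨hx, fun h => hyx (by simpa using h.symm)⟩)
  refine ⟨V, A \ V, hV, hA.diff hV, ⟨x, hxV⟩, ⟨y, hyA, fun hyV => ?_⟩, disjoint_sdiff_right, ?_⟩
  · exact (hVsub hyV).2 rfl
  · rw [union_diff_cancel (fun z hz => (hVsub hz).1)]

lemma disjointify : ∀ (n : ℕ) (W : Fin n → Set X), (∀ i, IsClopen (W i)) →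
    ∃ C : Fin n → Set X, (∀ i, IsClopen (C i)) ∧ (∀ i, C i ⊆ W i) ∧
      (∀ i j, i ≠ j → Disjoint (C i) (C j)) ∧ (⋃ i, C i) = ⋃ i, W i := by
  intro n
  induction n with
  | zero => exact fun W _ => ⟨W, by simp, by simp, by simp [Fin.elim0], rfl⟩
  | succ n ih =>
    intro W hW
    obtain ⟨C', hC'cl, hC'sub, hC'dis, hC'un⟩ := ih (fun i => W i.succ) (fun i => hW i.succ)
    refine ⟨Fin.cases (W 0) (fun i => C' i \ W 0), ?_, ?_, ?_, ?_⟩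
    · intro i
      induction i using Fin.cases with
      | zero => simpa using hW 0
      | succ i => simpa using (hC'cl i).diff (hW 0)
    · intro i
      induction i using Fin.cases with
      | zero => simp
      | succ i => simpa using (diff_subset.trans (hC'sub i))
    · intro i j hij
      induction i using Fin.cases with
      | zero =>
        induction j using Fin.cases with
        | zero => exact absurd rfl hij
        | succ j => simpa using disjoint_sdiff_right
      | succ i =>
        induction j using Fin.cases with
        | zero => simpa using disjoint_sdiff_left
        | succ j =>
          simp only [Fin.cases_succ]
          exact ((hC'dis i j (fun h => hij (by rw [h]))).mono diff_subset diff_subset)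
    · ext x
      simp only [mem_iUnion, Fin.exists_fin_succ, Fin.cases_succ, Fin.cases_zero]
      constructor
      · rintro (h | ⟨i, hi⟩)
        · exact Or.inl h
        · exact Or.inr ⟨i, hC'sub i hi.1⟩
      · rintro (h | ⟨i, hi⟩)
        · exact Or.inl h
        · by_cases hx0 : x ∈ W 0
          · exact Or.inl hx0
          · have : x ∈ ⋃ i, C' i := hC'un ▸ mem_iUnion.2 ⟨i, hi⟩
            obtain ⟨j, hj⟩ := mem_iUnion.1 this
            exact Or.inr ⟨j, hj, hx0⟩

lemma exists_fine_partition {A : Set X} (hA : IsClopen A) (hne : A.Nonempty)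
    {ε : ℝ} (hε : 0 < ε) :
    ∃ (n : ℕ) (C : Fin (n + 1) → Set X), IsPartn A ε C := by
  classical
  have hball : ∀ x ∈ A, ∃ V : Set X, IsClopen V ∧ x ∈ V ∧ V ⊆ A ∩ Metric.ball x (ε/3) :=
    fun x hx => compact_exists_isClopen_in_isOpen (hA.2.inter isOpen_ball)
      ⟨hx, mem_ball_self (by positivity)⟩
  choose! W hWcl hWx hWsub using hball
  obtain ⟨t, htA, hcov⟩ := hA.1.isCompact.elim_nhds_subcover W
    (fun x hx => ((hWcl x hx).2).mem_nhds (hWx x hx))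
  set m := t.card with hm
  set e : {x // x ∈ t} ≃ Fin m := t.equivFin with he
  obtain ⟨C, hCcl, hCsub, hCdis, hCun⟩ := disjointify m (fun i => W (e.symm i))
    (fun i => hWcl _ (htA _ (e.symm i).2))
  have hWA : ∀ i : Fin m, W ((e.symm i : {x // x ∈ t}) : X) ⊆ A :=
    fun i => (hWsub _ (htA _ (e.symm i).2)).trans inter_subset_left
  have hUW : (⋃ i, W ((e.symm i : {x // x ∈ t}) : X)) = ⋃ x ∈ t, W x := by
    ext z
    simp only [mem_iUnion]
    constructor
    · rintro ⟨i, hi⟩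
      exact ⟨_, (e.symm i).2, hi⟩
    · rintro ⟨x, hx, hz⟩
      exact ⟨e ⟨x, hx⟩, by simpa using hz⟩
  have hAcov : A ⊆ ⋃ i, C i := by rw [hCun, hUW]; exact hcov
  have hCA : ∀ i, C i ⊆ A := fun i => (hCsub i).trans (hWA i)
  have hCdiam : ∀ i, Metric.diam (C i) < ε := by
    intro i
    have h1 : C i ⊆ Metric.ball ((e.symm i : {x // x ∈ t}) : X) (ε/3) :=
      (hCsub i).trans ((hWsub _ (htA _ (e.symm i).2)).trans inter_subset_right)
    calc Metric.diam (C i) ≤ Metric.diam (Metric.ball ((e.symm i : {x // x ∈ t}) : X) (ε/3)) :=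
          Metric.diam_mono h1 Metric.isBounded_ball
      _ ≤ 2 * (ε/3) := Metric.diam_ball (by positivity)
      _ < ε := by linarith
  obtain ⟨x0, hx0⟩ := hne
  obtain ⟨i0, hi0⟩ := mem_iUnion.1 (hAcov hx0)
  have hscard : 0 < Fintype.card {i : Fin m // (C i).Nonempty} :=
    Fintype.card_pos_iff.2 ⟨⟨i0, ⟨x0, hi0⟩⟩⟩
  obtain ⟨n, hn⟩ : ∃ n, Fintype.card {i : Fin m // (C i).Nonempty} = n + 1 :=
    ⟨_, (Nat.succ_pred_eq_of_pos hscard).symm⟩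
  set f : Fin (n + 1) ≃ {i : Fin m // (C i).Nonempty} := (Fintype.equivFinOfCardEq hn).symm
    with hf
  refine ⟨n, fun j => C (f j), fun j => hCcl _, fun j => (f j).2, fun j => hCdiam _,
    fun i j hij => hCdis _ _ (fun h => hij (f.injective (Subtype.ext h))), ?_⟩
  apply subset_antisymm
  · exact iUnion_subset fun j => hCA _
  · intro z hz
    obtain ⟨i, hi⟩ := mem_iUnion.1 (hAcov hz)
    refine mem_iUnion.2 ⟨f.symm ⟨i, ⟨z, hi⟩⟩, ?_⟩
    simpa using hi

lemma partition_pad [PerfectSpace X] {A : Set X} {ε : ℝ} :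
    ∀ (N n : ℕ), n ≤ N → ∀ (C : Fin (n + 1) → Set X), IsPartn A ε C →
      ∃ D : Fin (N + 1) → Set X, IsPartn A ε D := by
  intro N
  induction N with
  | zero =>
    intro n hn C hC
    interval_cases n
    exact ⟨C, hC⟩
  | succ N ih =>
    intro n hn C hC
    rcases Nat.lt_or_ge n (N + 1) with h | h
    · -- first pad to N, then split once
      obtain ⟨D, hD⟩ := ih n (Nat.lt_succ_iff.1 h) C hC
      obtain ⟨hDcl, hDne, hDdiam, hDdis, hDun⟩ := hD
      obtain ⟨B₁, B₂, hB₁cl, hB₂cl, hB₁ne, hB₂ne, hBdis, hBun⟩ := split_two (hDcl 0) (hDne 0)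
      have hB₁sub : B₁ ⊆ D 0 := hBun ▸ subset_union_left
      have hB₂sub : B₂ ⊆ D 0 := hBun ▸ subset_union_right
      have hbdd : Bornology.IsBounded (D 0) := ((hDcl 0).1.isCompact).isBounded
      set E : Fin (N + 2) → Set X := Fin.cons B₁ (Function.update D 0 B₂) with hE
      have hE0 : E 0 = B₁ := by rw [hE, Fin.cons_zero]
      have hEsucc : ∀ j : Fin (N + 1), E j.succ = if j = 0 then B₂ else D j := by
        intro j
        rw [hE, Fin.cons_succ]
        by_cases hj : j = 0
        · subst hj; simp
        · rw [Function.update_of_ne hj, if_neg hj]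
      have hEsub : ∀ i, E i ⊆ A := by
        intro i
        induction i using Fin.cases with
        | zero => rw [hE0]; exact hB₁sub.trans (hDun ▸ subset_iUnion D 0)
        | succ j =>
          rw [hEsucc]
          by_cases hj : j = 0
          · simp only [hj, if_pos rfl]
            exact hB₂sub.trans (hDun ▸ subset_iUnion D 0)
          · simp only [if_neg hj]
            exact hDun ▸ subset_iUnion D j
      refine ⟨E, ?_, ?_, ?_, ?_, ?_⟩
      · intro i
        induction i using Fin.cases with
        | zero => rw [hE0]; exact hB₁cl
        | succ j => rw [hEsucc]; split <;> [exact hB₂cl; exact hDcl j]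
      · intro i
        induction i using Fin.cases with
        | zero => rw [hE0]; exact hB₁ne
        | succ j => rw [hEsucc]; split <;> [exact hB₂ne; exact hDne j]
      · intro i
        induction i using Fin.cases with
        | zero =>
          have : Metric.diam B₁ ≤ Metric.diam (D 0) := Metric.diam_mono hB₁sub hbdd
          rw [hE0]; exact lt_of_le_of_lt this (hDdiam 0)
        | succ j =>
          rw [hEsucc]
          split
          · exact lt_of_le_of_lt (Metric.diam_mono hB₂sub hbdd) (hDdiam 0)
          · exact hDdiam j
      · intro i j hij
        induction i using Fin.cases with
        | zero =>
          induction j using Fin.cases with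
          | zero => exact absurd rfl hij
          | succ j =>
            rw [hE0, hEsucc]
            by_cases hj : j = 0
            · simpa [hj] using hBdis
            · simp only [if_neg hj]
              exact (hDdis 0 j (Ne.symm hj)).mono hB₁sub le_rfl
        | succ i =>
          induction j using Fin.cases with
          | zero =>
            rw [hE0, hEsucc]
            by_cases hi : i = 0
            · simpa [hi] using hBdis.symm
            · simp only [if_neg hi]
              exact ((hDdis 0 i (Ne.symm hi)).mono hB₁sub le_rfl).symm
          | succ j =>
            have hij' : i ≠ j := fun h => hij (by rw [h])
            rw [hEsucc, hEsucc]
            by_cases hi : i = 0 <;> by_cases hj : j = 0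
            · exact absurd (hi.trans hj.symm) hij'
            · simp only [if_pos hi, if_neg hj]
              exact (hDdis 0 j (Ne.symm hj)).mono hB₂sub le_rfl
            · simp only [if_neg hi, if_pos hj]
              exact ((hDdis 0 i (Ne.symm hi)).mono hB₂sub le_rfl).symm
            · simp only [if_neg hi, if_neg hj]
              exact hDdis i j hij'
      · apply subset_antisymm
        · exact iUnion_subset hEsub
        · intro z hz
          rw [← hDun] at hz
          obtain ⟨j, hj⟩ := mem_iUnion.1 hz
          by_cases hj0 : j = 0
          · subst hj0
            rw [← hBun] at hj
            rcases hj with h | h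
            · exact mem_iUnion.2 ⟨0, h⟩
            · exact mem_iUnion.2 ⟨Fin.succ 0, by rw [hEsucc]; simpa using h⟩
          · exact mem_iUnion.2 ⟨j.succ, by rw [hEsucc, if_neg hj0]; exact hj⟩
    · -- n = N + 1
      have : n = N + 1 := le_antisymm hn h
      subst this
      exact ⟨C, hC⟩


lemma exists_partition_ge [PerfectSpace X] {A : Set X} (hA : IsClopen A) (hne : A.Nonempty)
    {ε : ℝ} (hε : 0 < ε) :
    ∃ n₀ : ℕ, ∀ N, n₀ ≤ N → ∃ C : Fin (N + 1) → Set X, IsPartn A ε C := by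
  obtain ⟨n, C, hC⟩ := exists_fine_partition hA hne hε
  exact ⟨n, fun N hN => partition_pad N n hN C hC⟩

end Basic

lemma refine_pair {X Y : Type*}
    [MetricSpace X] [CompactSpace X] [PerfectSpace X] [TotallyDisconnectedSpace X]
    [MetricSpace Y] [CompactSpace Y] [PerfectSpace Y] [TotallyDisconnectedSpace Y]
    {A : Set X} {B : Set Y} (hA : IsClopen A) (hneA : A.Nonempty)
    (hB : IsClopen B) (hneB : B.Nonempty) {ε : ℝ} (hε : 0 < ε) :
    ∃ (n : ℕ) (C : Fin (n+1) → Set X) (D : Fin (n+1) → Set Y),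
      IsPartn A ε C ∧ IsPartn B ε D := by
  obtain ⟨a, ha⟩ := exists_partition_ge hA hneA hε
  obtain ⟨b, hb⟩ := exists_partition_ge hB hneB hε
  obtain ⟨C, hC⟩ := ha (max a b) (le_max_left a b)
  obtain ⟨D, hD⟩ := hb (max a b) (le_max_right a b)
  exact ⟨max a b, C, D, hC, hD⟩

/-- A pair of matched clopen partitions of `X` and `Y` with a common index type. -/
structure CPar (X Y : Type*) [MetricSpace X] [MetricSpace Y] where
  σ : Type
  C : σ → Set X
  D : σ → Set Y
  hCcl : ∀ i, IsClopen (C i)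
  hDcl : ∀ i, IsClopen (D i)
  hCne : ∀ i, (C i).Nonempty
  hDne : ∀ i, (D i).Nonempty
  hCdis : ∀ i j, i ≠ j → Disjoint (C i) (C j)
  hDdis : ∀ i j, i ≠ j → Disjoint (D i) (D j)
  hCun : ⋃ i, C i = Set.univ
  hDun : ⋃ i, D i = Set.univ

section Seq

variable {X Y : Type*}
    [MetricSpace X] [CompactSpace X] [PerfectSpace X] [TotallyDisconnectedSpace X] [Nonempty X]
    [MetricSpace Y] [CompactSpace Y] [PerfectSpace Y] [TotallyDisconnectedSpace Y] [Nonempty Y]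

lemma cpar_step (P : CPar X Y) {ε : ℝ} (hε : 0 < ε) : ∃ Q : CPar X Y,
    (∀ i, Metric.diam (Q.C i) ≤ ε) ∧ (∀ i, Metric.diam (Q.D i) ≤ ε) ∧
    ∀ i, ∃ j, Q.C i ⊆ P.C j ∧ Q.D i ⊆ P.D j := by
  have h : ∀ j : P.σ, ∃ (n : ℕ) (C : Fin (n+1) → Set X) (D : Fin (n+1) → Set Y),
      IsPartn (P.C j) ε C ∧ IsPartn (P.D j) ε D :=
    fun j => refine_pair (P.hCcl j) (P.hCne j) (P.hDcl j) (P.hDne j) hε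
  choose n C D hC hD using h
  have hCsub : ∀ (j) (i : Fin (n j + 1)), C j i ⊆ P.C j :=
    fun j i => (hC j).2.2.2.2 ▸ subset_iUnion (C j) i
  have hDsub : ∀ (j) (i : Fin (n j + 1)), D j i ⊆ P.D j :=
    fun j i => (hD j).2.2.2.2 ▸ subset_iUnion (D j) i
  refine ⟨⟨Σ j : P.σ, Fin (n j + 1), fun p => C p.1 p.2, fun p => D p.1 p.2,
    fun p => (hC p.1).1 p.2, fun p => (hD p.1).1 p.2,
    fun p => (hC p.1).2.1 p.2, fun p => (hD p.1).2.1 p.2, ?_, ?_, ?_, ?_⟩,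
    fun p => le_of_lt ((hC p.1).2.2.1 p.2), fun p => le_of_lt ((hD p.1).2.2.1 p.2),
    fun p => ⟨p.1, hCsub p.1 p.2, hDsub p.1 p.2⟩⟩
  · rintro ⟨j₁, i₁⟩ ⟨j₂, i₂⟩ hne
    by_cases hj : j₁ = j₂
    · subst hj
      have hi : i₁ ≠ i₂ := fun h => hne (by rw [h])
      exact (hC j₁).2.2.2.1 i₁ i₂ hi
    · exact (P.hCdis j₁ j₂ hj).mono (hCsub j₁ i₁) (hCsub j₂ i₂)
  · rintro ⟨j₁, i₁⟩ ⟨j₂, i₂⟩ hne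
    by_cases hj : j₁ = j₂
    · subst hj
      have hi : i₁ ≠ i₂ := fun h => hne (by rw [h])
      exact (hD j₁).2.2.2.1 i₁ i₂ hi
    · exact (P.hDdis j₁ j₂ hj).mono (hDsub j₁ i₁) (hDsub j₂ i₂)
  · apply eq_univ_of_forall
    intro x
    have : x ∈ ⋃ j, P.C j := P.hCun.symm ▸ mem_univ x
    obtain ⟨j, hj⟩ := mem_iUnion.1 this
    rw [← (hC j).2.2.2.2] at hj
    obtain ⟨i, hi⟩ := mem_iUnion.1 hj
    exact mem_iUnion.2 ⟨⟨j, i⟩, hi⟩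
  · apply eq_univ_of_forall
    intro y
    have : y ∈ ⋃ j, P.D j := P.hDun.symm ▸ mem_univ y
    obtain ⟨j, hj⟩ := mem_iUnion.1 this
    rw [← (hD j).2.2.2.2] at hj
    obtain ⟨i, hi⟩ := mem_iUnion.1 hj
    exact mem_iUnion.2 ⟨⟨j, i⟩, hi⟩

def cparBase (X Y : Type*) [MetricSpace X] [MetricSpace Y] [Nonempty X] [Nonempty Y] :
    CPar X Y where
  σ := PUnit
  C := fun _ => Set.univ
  D := fun _ => Set.univ
  hCcl := fun _ => isClopen_univ
  hDcl := fun _ => isClopen_univ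
  hCne := fun _ => univ_nonempty
  hDne := fun _ => univ_nonempty
  hCdis := fun i j h => absurd (Subsingleton.elim i j) h
  hDdis := fun i j h => absurd (Subsingleton.elim i j) h
  hCun := iUnion_const _
  hDun := iUnion_const _

lemma exists_cpar_seq : ∃ P : ℕ → CPar X Y,
    (∀ k i, Metric.diam ((P (k+1)).C i) ≤ 1/((k:ℝ)+1)) ∧
    (∀ k i, Metric.diam ((P (k+1)).D i) ≤ 1/((k:ℝ)+1)) ∧
    (∀ k i, ∃ j, (P (k+1)).C i ⊆ (P k).C j ∧ (P (k+1)).D i ⊆ (P k).D j) := by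
  have hstep : ∀ (k : ℕ) (P : CPar X Y), ∃ Q : CPar X Y,
      (∀ i, Metric.diam (Q.C i) ≤ 1/((k:ℝ)+1)) ∧ (∀ i, Metric.diam (Q.D i) ≤ 1/((k:ℝ)+1)) ∧
      ∀ i, ∃ j, Q.C i ⊆ P.C j ∧ Q.D i ⊆ P.D j :=
    fun k P => cpar_step P (by positivity)
  choose F h1 h2 h3 using hstep
  refine ⟨fun k => Nat.rec (motive := fun _ => CPar X Y) (cparBase X Y) (fun k Pk => F k Pk) k,
    fun k i => h1 k _ i, fun k i => h2 k _ i, fun k i => h3 k _ i⟩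

end Seq

lemma exists_limit_map {X Y : Type*} [MetricSpace X] [MetricSpace Y] [CompactSpace Y]
    {σ : ℕ → Type} (C : ∀ k, σ k → Set X) (D : ∀ k, σ k → Set Y)
    (hCo : ∀ k i, IsOpen (C k i))
    (hCun : ∀ k (x : X), ∃ i, x ∈ C k i)
    (hCdis : ∀ k i j, i ≠ j → Disjoint (C k i) (C k j))
    (hDcl : ∀ k i, IsClosed (D k i))
    (hDne : ∀ k i, (D k i).Nonempty)
    (hDd : ∀ k i, Metric.diam (D (k+1) i) ≤ 1/((k:ℝ)+1))
    (href : ∀ k i, ∃ j, C (k+1) i ⊆ C k j ∧ D (k+1) i ⊆ D k j) :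
    ∃ g : X → Y, Continuous g ∧ ∀ k (x : X) i, x ∈ C k i → g x ∈ D k i := by
  have huniq : ∀ k (x : X) i j, x ∈ C k i → x ∈ C k j → i = j := by
    intro k x i j hi hj
    by_contra hne
    exact Set.disjoint_left.mp (hCdis k i j hne) hi hj
  choose ix hix using hCun
  have hnest : ∀ (x : X) (k), D (k+1) (ix (k+1) x) ⊆ D k (ix k x) := by
    intro x k
    obtain ⟨j, hCsub, hDsub⟩ := href k (ix (k+1) x)
    have hj : j = ix k x := huniq k x j _ (hCsub (hix (k+1) x)) (hix k x)
    exact hj ▸ hDsub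
  have hnon : ∀ x : X, (⋂ k, D k (ix k x)).Nonempty := fun x =>
    IsCompact.nonempty_iInter_of_sequence_nonempty_isCompact_isClosed _
      (hnest x) (fun k => hDne k _) ((hDcl 0 _).isCompact) (fun k => hDcl k _)
  choose g hg using hnon
  have hgmem : ∀ k (x : X), g x ∈ D k (ix k x) := fun k x => mem_iInter.1 (hg x) k
  refine ⟨g, ?_, ?_⟩
  · rw [continuous_iff_continuousAt]
    intro x
    rw [ContinuousAt, Metric.tendsto_nhds]
    intro ε hε
    obtain ⟨k, hk⟩ := exists_nat_one_div_lt hε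
    filter_upwards [(hCo (k+1) (ix (k+1) x)).mem_nhds (hix (k+1) x)] with x' hx'
    have hixeq : ix (k+1) x' = ix (k+1) x := huniq _ x' _ _ (hix (k+1) x') hx'
    have h1 : g x' ∈ D (k+1) (ix (k+1) x) := hixeq ▸ hgmem (k+1) x'
    have h2 : g x ∈ D (k+1) (ix (k+1) x) := hgmem (k+1) x
    calc dist (g x') (g x) ≤ Metric.diam (D (k+1) (ix (k+1) x)) :=
          Metric.dist_le_diam_of_mem ((hDcl _ _).isCompact.isBounded) h1 h2
      _ ≤ 1/((k:ℝ)+1) := hDd k _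
      _ < ε := hk
  · intro k x i hxi
    have hieq : i = ix k x := huniq k x i _ hxi (hix k x)
    exact hieq ▸ hgmem k x

/-- Brouwer: any two nonempty perfect compact totally disconnected metric spaces
are homeomorphic. -/
lemma cantor_homeo (X Y : Type*)
    [MetricSpace X] [CompactSpace X] [PerfectSpace X] [TotallyDisconnectedSpace X] [Nonempty X]
    [MetricSpace Y] [CompactSpace Y] [PerfectSpace Y] [TotallyDisconnectedSpace Y] [Nonempty Y] :
    Nonempty (X ≃ₜ Y) := by
  obtain ⟨P, h1, h2, h3⟩ := exists_cpar_seq (X := X) (Y := Y)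
  have hCmem : ∀ k (x : X), ∃ i, x ∈ (P k).C i := fun k x => by
    have : x ∈ ⋃ i, (P k).C i := (P k).hCun.symm ▸ mem_univ x
    exact mem_iUnion.1 this
  have hDmem : ∀ k (y : Y), ∃ i, y ∈ (P k).D i := fun k y => by
    have : y ∈ ⋃ i, (P k).D i := (P k).hDun.symm ▸ mem_univ y
    exact mem_iUnion.1 this
  obtain ⟨g, hgc, hg⟩ := exists_limit_map (fun k => (P k).C) (fun k => (P k).D)
    (fun k i => ((P k).hCcl i).2) hCmem (fun k => (P k).hCdis)
    (fun k i => ((P k).hDcl i).1) (fun k => (P k).hDne) h2 h3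
  obtain ⟨f, hfc, hf⟩ := exists_limit_map (fun k => (P k).D) (fun k => (P k).C)
    (fun k i => ((P k).hDcl i).2) hDmem (fun k => (P k).hDdis)
    (fun k i => ((P k).hCcl i).1) (fun k => (P k).hCne) h1
    (fun k i => (h3 k i).imp (fun j hj => ⟨hj.2, hj.1⟩))
  have hfg : ∀ x : X, f (g x) = x := by
    intro x
    have key : ∀ k : ℕ, dist x (f (g x)) ≤ 1/((k:ℝ)+1) := by
      intro k
      obtain ⟨i, hi⟩ := hCmem (k+1) x
      have h4 : g x ∈ (P (k+1)).D i := hg (k+1) x i hi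
      have h5 : f (g x) ∈ (P (k+1)).C i := hf (k+1) (g x) i h4
      exact le_trans (Metric.dist_le_diam_of_mem
        (((P (k+1)).hCcl i).1.isCompact.isBounded) hi h5) (h1 k i)
    have h0 : dist x (f (g x)) ≤ 0 := by
      by_contra hcon
      push_neg at hcon
      obtain ⟨k, hk⟩ := exists_nat_one_div_lt hcon
      exact absurd (key k) (not_le.2 hk)
    exact (dist_le_zero.1 h0).symm
  have hgf : ∀ y : Y, g (f y) = y := by
    intro y
    have key : ∀ k : ℕ, dist y (g (f y)) ≤ 1/((k:ℝ)+1) := by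
      intro k
      obtain ⟨i, hi⟩ := hDmem (k+1) y
      have h4 : f y ∈ (P (k+1)).C i := hf (k+1) y i hi
      have h5 : g (f y) ∈ (P (k+1)).D i := hg (k+1) (f y) i h4
      exact le_trans (Metric.dist_le_diam_of_mem
        (((P (k+1)).hDcl i).1.isCompact.isBounded) hi h5) (h2 k i)
    have h0 : dist y (g (f y)) ≤ 0 := by
      by_contra hcon
      push_neg at hcon
      obtain ⟨k, hk⟩ := exists_nat_one_div_lt hcon
      exact absurd (key k) (not_le.2 hk)
    exact (dist_le_zero.1 h0).symm
  exact ⟨⟨⟨g, f, hfg, hgf⟩, hgc, hfc⟩⟩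



lemma perfectSpace_subtype {X : Type*} [TopologicalSpace X] [PerfectSpace X]
    {s : Set X} (hs : IsOpen s) : PerfectSpace s := by
  rw [perfectSpace_iff_forall_not_isolated]
  intro x
  rw [← Filter.forall_mem_nonempty_iff_neBot]
  intro t ht
  obtain ⟨u, huo, hxu, hsub⟩ := mem_nhdsWithin.1 ht
  obtain ⟨u', hu'o, hu⟩ := isOpen_induced_iff.1 huo
  have hx' : (x : X) ∈ u' ∩ s := ⟨by rw [← hu] at hxu; exact hxu, x.2⟩
  have hop : IsOpen (u' ∩ s) := hu'o.inter hs
  have hnb : (𝓝[≠] (x : X)).NeBot := PerfectSpace.not_isolated _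
  have hmem : (u' ∩ s) \ {(x : X)} ∈ 𝓝[≠] (x : X) := by
    rw [diff_eq, Set.inter_comm]
    exact inter_mem_nhdsWithin _ (hop.mem_nhds hx')
  obtain ⟨y, hy⟩ := hnb.nonempty_of_mem hmem
  refine ⟨⟨y, hy.1.2⟩, hsub ⟨?_, ?_⟩⟩
  · rw [← hu]
    exact hy.1.1
  · exact fun h => hy.2 (mem_singleton_iff.2 (congrArg Subtype.val h))

lemma glue_homeo {X Y : Type*} [TopologicalSpace X] [TopologicalSpace Y]
    [CompactSpace X] [T2Space Y] {ι : Type*} [Finite ι]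
    (V : ι → Set X) (W : ι → Set Y)
    (hVcl : ∀ i, IsClopen (V i)) (hWcl : ∀ i, IsClopen (W i))
    (hVdis : ∀ i j, i ≠ j → Disjoint (V i) (V j))
    (hWdis : ∀ i j, i ≠ j → Disjoint (W i) (W j))
    (hVun : ⋃ i, V i = Set.univ) (hWun : ⋃ i, W i = Set.univ)
    (h : ∀ i, (V i) ≃ₜ (W i)) :
    ∃ e : X ≃ₜ Y, ∀ (x : X) (i : ι), x ∈ V i → e x ∈ W i := by
  classical
  have hVmem : ∀ x : X, ∃ i, x ∈ V i := fun x => mem_iUnion.1 (hVun.symm ▸ mem_univ x)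
  have hWmem : ∀ y : Y, ∃ i, y ∈ W i := fun y => mem_iUnion.1 (hWun.symm ▸ mem_univ y)
  have hVuniq : ∀ (x : X) i j, x ∈ V i → x ∈ V j → i = j := by
    intro x i j hi hj
    by_contra hne
    exact Set.disjoint_left.mp (hVdis i j hne) hi hj
  have hWuniq : ∀ (y : Y) i j, y ∈ W i → y ∈ W j → i = j := by
    intro y i j hi hj
    by_contra hne
    exact Set.disjoint_left.mp (hWdis i j hne) hi hj
  choose I hI using hVmem
  choose J hJ using hWmem
  set g : X → Y := fun x => (h (I x) ⟨x, hI x⟩ : Y) with hgdef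
  have hcast : ∀ (i j : ι) (hij : i = j) (x : X) (hxi : x ∈ V i) (hxj : x ∈ V j),
      ((h i ⟨x, hxi⟩ : W i) : Y) = ((h j ⟨x, hxj⟩ : W j) : Y) := by
    intro i j hij x hxi hxj
    subst hij
    rfl
  have hgW : ∀ (x : X) i, x ∈ V i → g x ∈ W i := by
    intro x i hx
    have heq : g x = ((h i ⟨x, hx⟩ : W i) : Y) :=
      hcast (I x) i (hVuniq x _ _ (hI x) hx) x (hI x) hx
    rw [heq]
    exact (h i ⟨x, hx⟩).2
  have hgcont : Continuous g := by
    apply (locallyFinite_of_finite V).continuous hVun (fun i => (hVcl i).1)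
    intro i
    rw [continuousOn_iff_continuous_restrict]
    have heq : (V i).domRestrict g = fun z => ((h i z : W i) : Y) := by
      funext z
      exact hcast (I z.val) i (hVuniq _ _ _ (hI z.val) z.2) z.val (hI z.val) z.2
    rw [heq]
    exact continuous_subtype_val.comp (h i).continuous
  have hginj : Function.Injective g := by
    intro x x' hxx'
    have hIxx' : I x' = I x := by
      apply hWuniq (g x)
      · rw [hxx']
        exact hgW x' (I x') (hI x')
      · exact hgW x (I x) (hI x)
    have hx'mem : x' ∈ V (I x) := hIxx' ▸ hI x'
    have hcoe : ((h (I x) ⟨x, hI x⟩ : W (I x)) : Y) = ((h (I x) ⟨x', hx'mem⟩ : W (I x)) : Y) := by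
      calc ((h (I x) ⟨x, hI x⟩ : W (I x)) : Y) = g x := rfl
        _ = g x' := hxx'
        _ = _ := hcast (I x') (I x) hIxx' x' (hI x') hx'mem
    have := (h (I x)).injective (Subtype.ext hcoe)
    exact congrArg Subtype.val this
  have hgsurj : Function.Surjective g := by
    intro y
    set x : X := ((h (J y)).symm ⟨y, hJ y⟩ : V (J y)).val with hx
    have hxV : x ∈ V (J y) := ((h (J y)).symm ⟨y, hJ y⟩).2
    refine ⟨x, ?_⟩
    have h1 : g x = ((h (J y) ⟨x, hxV⟩ : W (J y)) : Y) :=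
      hcast (I x) (J y) (hVuniq x _ _ (hI x) hxV) x (hI x) hxV
    rw [h1]
    have h2 : (⟨x, hxV⟩ : V (J y)) = (h (J y)).symm ⟨y, hJ y⟩ := Subtype.ext rfl
    rw [h2, Homeomorph.apply_symm_apply]
  exact ⟨Continuous.homeoOfEquivCompactToT2 (f := Equiv.ofBijective g ⟨hginj, hgsurj⟩) hgcont,
    fun x i hx => hgW x i hx⟩

/-- If there are commuting continuous maps `π_k : X₂ → X₁` whose images meet every
element of finer and finer clopen partitions of `X₁`, then `(X₂,f₂) ⇝ (X₁,f₁)`: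
there are homeomorphisms `ψ_k` with `ψ_k ∘ f₂ ∘ ψ_k⁻¹ → f₁` uniformly. -/
theorem stmt_8 {X₁ X₂ : Type*}
    [MetricSpace X₁] [CompactSpace X₁] [PerfectSpace X₁]
    [TotallyDisconnectedSpace X₁] [Nonempty X₁]
    [MetricSpace X₂] [CompactSpace X₂] [PerfectSpace X₂]
    [TotallyDisconnectedSpace X₂] [Nonempty X₂]
    (f₁ : X₁ → X₁) (hf₁ : Continuous f₁) (hf₁s : Function.Surjective f₁)
    (f₂ : X₂ → X₂) (hf₂ : Continuous f₂) (hf₂s : Function.Surjective f₂)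
    {ι : ℕ → Type*} [∀ k, Fintype (ι k)] (U : ∀ k, ι k → Set X₁)
    (hne : ∀ k i, (U k i).Nonempty) (hclopen : ∀ k i, IsClopen (U k i))
    (hdisj : ∀ k, ∀ i j, i ≠ j → Disjoint (U k i) (U k j))
    (hcover : ∀ k, ∀ x : X₁, ∃ i, x ∈ U k i)
    (hmesh : ∀ ε : ℝ, 0 < ε → ∃ K : ℕ, ∀ k ≥ K, ∀ i, Metric.diam (U k i) < ε)
    (π : ℕ → X₂ → X₁) (hπc : ∀ k, Continuous (π k))
    (hπcomm : ∀ k, (π k) ∘ f₂ = f₁ ∘ (π k))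
    (hπmeet : ∀ k i, (Set.range (π k) ∩ U k i).Nonempty) :
    ∃ ψ : ℕ → X₂ ≃ₜ X₁,
      TendstoUniformly (fun k x => ψ k (f₂ ((ψ k).symm x))) f₁ atTop := by
  classical
  have key : ∀ k : ℕ, ∃ e : X₂ ≃ₜ X₁, ∀ (x : X₂) (i : ι k), π k x ∈ U k i → e x ∈ U k i := by
    intro k
    set V : ι k → Set X₂ := fun i => π k ⁻¹' U k i with hV
    have hVcl : ∀ i, IsClopen (V i) := fun i => (hclopen k i).preimage (hπc k)
    have hVne : ∀ i, (V i).Nonempty := by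
      intro i
      obtain ⟨y, ⟨x, rfl⟩, hyU⟩ := hπmeet k i
      exact ⟨x, hyU⟩
    have hVdis : ∀ i j, i ≠ j → Disjoint (V i) (V j) :=
      fun i j hij => (hdisj k i j hij).preimage _
    have hVun : ⋃ i, V i = Set.univ :=
      eq_univ_of_forall fun x => mem_iUnion.2 (hcover k (π k x))
    have hUun : ⋃ i, U k i = Set.univ :=
      eq_univ_of_forall fun x => mem_iUnion.2 (hcover k x)
    have hhom : ∀ i, Nonempty ((V i) ≃ₜ (U k i)) := by
      intro i
      haveI : CompactSpace (V i) := isCompact_iff_compactSpace.1 ((hVcl i).1.isCompact)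
      haveI : CompactSpace (U k i) := isCompact_iff_compactSpace.1 ((hclopen k i).1.isCompact)
      haveI : PerfectSpace (V i) := perfectSpace_subtype (hVcl i).2
      haveI : PerfectSpace (U k i) := perfectSpace_subtype (hclopen k i).2
      haveI : Nonempty (V i) := (hVne i).to_subtype
      haveI : Nonempty (U k i) := (hne k i).to_subtype
      exact cantor_homeo _ _
    obtain ⟨e, he⟩ := glue_homeo V (U k) hVcl (hclopen k) hVdis (hdisj k) hVun hUun
      (fun i => (hhom i).some)
    exact ⟨e, fun x i hx => he x i hx⟩
  choose ψ hψ using key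
  refine ⟨ψ, ?_⟩
  rw [Metric.tendstoUniformly_iff]
  intro ε hε
  have huc := Metric.uniformContinuous_iff.1 (CompactSpace.uniformContinuous_of_continuous hf₁)
  obtain ⟨δ, hδ, hδ'⟩ := huc (ε/2) (by positivity)
  obtain ⟨K, hK⟩ := hmesh (min δ (ε/2)) (by positivity)
  filter_upwards [eventually_ge_atTop K] with k hk x
  have hclose : ∀ z : X₂, dist (ψ k z) (π k z) < min δ (ε/2) := by
    intro z
    obtain ⟨i, hi⟩ := hcover k (π k z)
    have h1 : ψ k z ∈ U k i := hψ k z i hi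
    have hb : Bornology.IsBounded (U k i) := (hclopen k i).1.isCompact.isBounded
    exact lt_of_le_of_lt (Metric.dist_le_diam_of_mem hb h1 hi) (hK k hk i)
  set y := (ψ k).symm x with hy
  have hx : ψ k y = x := (ψ k).apply_symm_apply x
  have comm : π k (f₂ y) = f₁ (π k y) := congrFun (hπcomm k) y
  calc dist (f₁ x) (ψ k (f₂ y))
      ≤ dist (f₁ x) (f₁ (π k y)) + dist (f₁ (π k y)) (ψ k (f₂ y)) := dist_triangle _ _ _
    _ < ε/2 + ε/2 := by
        apply add_lt_add
        · apply hδ'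
          rw [← hx]
          exact lt_of_lt_of_le (hclose y) (min_le_left _ _)
        · rw [← comm, dist_comm]
          exact lt_of_lt_of_le (hclose (f₂ y)) (min_le_right _ _)
    _ = ε := by ring
end

section
/- Let (X₁,f₁) and (X₂,f₂) be topological dynamical systems and (Y_k, g_k), k ≥ 1, a sequence of topological dynamical systems. Suppose there exist homeomorphisms ψ_k : Y_k → X₁ with ψ_k ∘ g_k ∘ ψ_k⁻¹ → f₁ uniformly, and that for each k there is a sequence of homeomorphisms X₂ → Y_k conjugating f₂ to maps converging uniformly to g_k. Then there is a sequence of homeomorphisms χ_j : X₂ → X₁ with χ_j ∘ f₂ ∘ χ_j⁻¹ → f₁ uniformly. -/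
open Filter

/-- Transitivity of approximation by conjugacy: if `(Y_k, g_k)` approximate `(X₁,f₁)`
via homeomorphisms and `(X₂,f₂) ⇝ (Y_k,g_k)` for each `k`, then `(X₂,f₂) ⇝ (X₁,f₁)`. -/
theorem stmt_9 {X₁ X₂ : Type*} [MetricSpace X₁] [CompactSpace X₁]
    [MetricSpace X₂] [CompactSpace X₂]
    (f₁ : X₁ → X₁) (hf₁ : Continuous f₁) (hf₁s : Function.Surjective f₁)
    (f₂ : X₂ → X₂) (hf₂ : Continuous f₂) (hf₂s : Function.Surjective f₂)
    {Y : ℕ → Type*} [∀ k, MetricSpace (Y k)] [∀ k, CompactSpace (Y k)]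
    (g : ∀ k, Y k → Y k) (hg : ∀ k, Continuous (g k))
    (hgs : ∀ k, Function.Surjective (g k))
    (ψ : ∀ k, Y k ≃ₜ X₁)
    (hψ : TendstoUniformly (fun k x => ψ k (g k ((ψ k).symm x))) f₁ atTop)
    (happrox : ∀ k, ∃ φ : ℕ → X₂ ≃ₜ Y k,
      TendstoUniformly (fun j y => φ j (f₂ ((φ j).symm y))) (g k) atTop) :
    ∃ χ : ℕ → X₂ ≃ₜ X₁,
      TendstoUniformly (fun j x => χ j (f₂ ((χ j).symm x))) f₁ atTop := by
  have hψu : ∀ k, UniformContinuous (ψ k) :=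
    fun k => CompactSpace.uniformContinuous_of_continuous (ψ k).continuous
  have key : ∀ k : ℕ, ∃ χ : X₂ ≃ₜ X₁,
      ∀ x, dist (ψ k (g k ((ψ k).symm x))) (χ (f₂ (χ.symm x))) < 1/(k+1) := by
    intro k
    obtain ⟨φ, hφ⟩ := happrox k
    have hε : (0:ℝ) < 1/(k+1) := by positivity
    obtain ⟨δ, hδ, hδ'⟩ := Metric.uniformContinuous_iff.mp (hψu k) _ hε
    rw [Metric.tendstoUniformly_iff] at hφ
    obtain ⟨j, hj⟩ := (hφ δ hδ).exists
    refine ⟨(φ j).trans (ψ k), fun x => ?_⟩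
    have := hδ' (hj ((ψ k).symm x))
    simpa using this
  choose χ hχ using key
  refine ⟨χ, ?_⟩
  rw [Metric.tendstoUniformly_iff]
  intro ε hε
  rw [Metric.tendstoUniformly_iff] at hψ
  have h1 := hψ (ε/2) (by linarith)
  have h2 : ∀ᶠ k : ℕ in atTop, 1/((k:ℝ)+1) < ε/2 :=
    tendsto_one_div_add_atTop_nhds_zero_nat.eventually (gt_mem_nhds (by linarith))
  filter_upwards [h1, h2] with k hk1 hk2 x
  calc dist (f₁ x) (χ k (f₂ ((χ k).symm x)))
      ≤ dist (f₁ x) (ψ k (g k ((ψ k).symm x)))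
        + dist (ψ k (g k ((ψ k).symm x))) (χ k (f₂ ((χ k).symm x))) := dist_triangle _ _ _
    _ < ε/2 + ε/2 := add_lt_add (hk1 x) (lt_trans (hχ k x) hk2)
    _ = ε := by ring
end

section
/- Let (Y,g) and (X,f) be topological dynamical systems. If there exist homeomorphisms ψ_k : Y → X with ψ_k ∘ g ∘ ψ_k⁻¹ → f uniformly, then Per(Y,g) ⊆ Per(X,f); that is, if g^n has a fixed point for some n ≥ 1, then f^n has a fixed point. -/
open Filter

/-- Uniform convergence passes to iterates when the limit is continuous on a
compact metric space. -/
lemma tendstoUniformly_iterate {X : Type*} [MetricSpace X] [CompactSpace X]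
    (f : X → X) (hf : Continuous f) (h : ℕ → X → X)
    (hh : TendstoUniformly h f atTop) (n : ℕ) :
    TendstoUniformly (fun k => (h k)^[n]) f^[n] atTop := by
  induction n with
  | zero =>
    rw [Metric.tendstoUniformly_iff]
    intro ε hε
    filter_upwards with k x
    simpa using hε
  | succ n ih =>
    rw [Metric.tendstoUniformly_iff] at hh ih ⊢
    intro ε hε
    obtain ⟨δ, hδ, hδ'⟩ := Metric.uniformContinuous_iff.mp
      (CompactSpace.uniformContinuous_of_continuous hf) (ε / 2) (half_pos hε)
    filter_upwards [hh (ε / 2) (half_pos hε), ih δ hδ] with k h1 h2 x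
    have e1 : f^[n + 1] x = f (f^[n] x) := Function.iterate_succ_apply' f n x
    have e2 : (h k)^[n + 1] x = h k ((h k)^[n] x) :=
      Function.iterate_succ_apply' (h k) n x
    rw [e1, e2]
    calc dist (f (f^[n] x)) (h k ((h k)^[n] x))
        ≤ dist (f (f^[n] x)) (f ((h k)^[n] x))
          + dist (f ((h k)^[n] x)) (h k ((h k)^[n] x)) := dist_triangle _ _ _
      _ < ε / 2 + ε / 2 := add_lt_add (hδ' (h2 x)) (h1 _)
      _ = ε := add_halves ε

/-- If `(Y,g) ⇝ (X,f)`, i.e. conjugates of `g` converge uniformly to `f`, then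
`Per(Y,g) ⊆ Per(X,f)`. -/
theorem stmt_10 {X Y : Type*} [MetricSpace X] [CompactSpace X]
    [MetricSpace Y] [CompactSpace Y]
    (f : X → X) (hf : Continuous f) (hfs : Function.Surjective f)
    (g : Y → Y) (hg : Continuous g) (hgs : Function.Surjective g)
    (ψ : ℕ → Y ≃ₜ X)
    (hψ : TendstoUniformly (fun k x => ψ k (g ((ψ k).symm x))) f atTop) :
    ∀ n : ℕ, 1 ≤ n → (∃ y : Y, g^[n] y = y) → ∃ x : X, f^[n] x = x := by
  intro n _ ⟨y, hy⟩
  set h : ℕ → X → X := fun k x => ψ k (g ((ψ k).symm x)) with hh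
  have hsemi : ∀ k, Function.Semiconj (ψ k) g (h k) := by
    intro k z
    simp [hh]
  -- fixed points of the iterated conjugates
  have hfix : ∀ k, (h k)^[n] (ψ k y) = ψ k y := by
    intro k
    have := ((hsemi k).iterate_right n) y
    rw [← this, hy]
  have hiter := tendstoUniformly_iterate f hf h hψ n
  rw [Metric.tendstoUniformly_iff] at hiter
  -- extract a convergent subsequence of the fixed points
  obtain ⟨x, -, φ, hφ, hx⟩ :=
    isCompact_univ.tendsto_subseq (x := fun k => ψ k y) (fun k => Set.mem_univ _)
  refine ⟨x, ?_⟩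
  -- f^[n] (ψ (φ j) y) → x
  have hdist : Tendsto (fun j => dist (f^[n] (ψ (φ j) y)) (ψ (φ j) y)) atTop (nhds 0) := by
    rw [Metric.tendsto_atTop]
    intro ε hε
    obtain ⟨N, hN⟩ := (hiter ε hε).exists_forall_of_atTop
    refine ⟨N, fun j hj => ?_⟩
    have := hN (φ j) (le_trans hj hφ.le_apply) (ψ (φ j) y)
    rw [hfix (φ j)] at this
    simpa [Real.dist_eq, abs_of_nonneg dist_nonneg] using this
  have h1 : Tendsto (fun j => f^[n] (ψ (φ j) y)) atTop (nhds x) := by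
    have := hdist
    refine Metric.tendsto_nhds.mpr fun ε hε => ?_
    have hx' := Metric.tendsto_nhds.mp hx (ε / 2) (half_pos hε)
    have hd := Metric.tendsto_nhds.mp hdist (ε / 2) (half_pos hε)
    filter_upwards [hx', hd] with j hj1 hj2
    calc dist (f^[n] (ψ (φ j) y)) x
        ≤ dist (f^[n] (ψ (φ j) y)) (ψ (φ j) y) + dist (ψ (φ j) y) x :=
          dist_triangle _ _ _
      _ < ε / 2 + ε / 2 := add_lt_add (by simpa [abs_of_nonneg dist_nonneg] using hj2)
          (by simpa using hj1)
      _ = ε := add_halves ε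
  have h2 : Tendsto (fun j => f^[n] (ψ (φ j) y)) atTop (nhds (f^[n] x)) :=
    ((hf.iterate n).continuousAt.tendsto).comp hx
  exact (tendsto_nhds_unique h2 h1)
end

section
/- Let (Λ,σ) be a two-sided subshift over a finite alphabet and let k > N > 1. Then there exists a clopen set F ⊆ Λ such that (1) the sets σ^l(F) for 0 ≤ l < N are pairwise disjoint, and (2) if t ∈ Λ and the word t(−k)…t(k) is not j-periodic for any j < N, then t ∈ ⋃_{−N < l < N} σ^l(F). -/
/-- The (invertible) shift on the full two-sided shift `V^ℤ`. -/
def shiftE (V : Type*) : Equiv.Perm (ℤ → V) where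
  toFun t i := t (i + 1)
  invFun t i := t (i - 1)
  left_inv t := funext fun i => congrArg t (by ring)
  right_inv t := funext fun i => congrArg t (by ring)

namespace MarkerAux

variable {V : Type*}

/-- Translation by `z` (equal to `σ^z`). -/
def tr (z : ℤ) (t : ℤ → V) : ℤ → V := fun i => t (i + z)

lemma tr_tr (a b : ℤ) (t : ℤ → V) : tr a (tr b t) = tr (a + b) t := by
  funext i; show t (i + a + b) = t (i + (a + b)); congr 1; ring

lemma tr_zero (t : ℤ → V) : tr 0 t = t := funext fun i => congrArg t (add_zero i)

lemma shift_zpow (z : ℤ) : ∀ t : ℤ → V, (shiftE V ^ z) t = tr z t := by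
  induction z using Int.induction_on with
  | zero =>
    intro t; rw [zpow_zero]; funext i; show t i = t (i + 0); rw [add_zero]
  | succ n ih =>
    intro t
    rw [zpow_add_one, Equiv.Perm.mul_apply, ih]
    funext i; show t (i + n + 1) = t (i + (n + 1)); congr 1; ring
  | pred n ih =>
    intro t
    rw [zpow_sub_one, Equiv.Perm.mul_apply, ih]
    funext i; show t (i + -(n : ℤ) - 1) = t (i + (-(n : ℤ) - 1)); congr 1; ring

lemma image_zpow (z : ℤ) (F : Set (ℤ → V)) :
    (shiftE V ^ z) '' F = tr (-z) ⁻¹' F := by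
  ext t
  constructor
  · rintro ⟨x, hx, rfl⟩
    show tr (-z) ((shiftE V ^ z) x) ∈ F
    rw [shift_zpow, tr_tr]
    have h : -z + z = 0 := by ring
    rw [h, tr_zero]; exact hx
  · intro htF
    refine ⟨tr (-z) t, htF, ?_⟩
    rw [shift_zpow, tr_tr]
    have h : z + -z = 0 := by ring
    rw [h, tr_zero]

lemma mem_tr {Λ : Set (ℤ → V)} (hinv : (shiftE V) '' Λ = Λ) (z : ℤ) {t : ℤ → V}
    (ht : t ∈ Λ) : tr z t ∈ Λ := by
  have h1 : ∀ s ∈ Λ, shiftE V s ∈ Λ := by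
    intro s hs; rw [← hinv]; exact Set.mem_image_of_mem _ hs
  have h2 : ∀ s ∈ Λ, (shiftE V).symm s ∈ Λ := by
    intro s hs
    rw [← hinv] at hs
    rcases hs with ⟨x, hx, rfl⟩
    simpa using hx
  induction z using Int.induction_on with
  | zero => rw [tr_zero]; exact ht
  | succ n ih =>
    have e : shiftE V (tr (n : ℤ) t) = tr ((n : ℤ) + 1) t := by
      funext i; show t (i + 1 + n) = t (i + (n + 1)); congr 1; ring
    rw [← e]; exact h1 _ ih
  | pred n ih =>
    have e : (shiftE V).symm (tr (-(n : ℤ)) t) = tr (-(n : ℤ) - 1) t := by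
      funext i; show t (i - 1 + -(n : ℤ)) = t (i + (-(n : ℤ) - 1)); congr 1; ring
    rw [← e]; exact h2 _ ih

/-- The dangerous translation amounts. -/
noncomputable def badJ (N : ℕ) : Finset ℤ := (Finset.Ioo (-(N : ℤ)) (N : ℤ)).erase 0

/-- Cylinder on window `[-k,k]` of the point `u`. -/
def Cyl (k : ℕ) (u : ℤ → V) : Set (ℤ → V) :=
  {t | ∀ i : ℤ, -(k : ℤ) ≤ i → i ≤ (k : ℤ) → t i = u i}

def nonper (N k : ℕ) (u : ℤ → V) : Prop :=
  ¬ (∃ j : ℕ, 1 ≤ j ∧ j < N ∧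
      ∀ i : ℤ, -(k : ℤ) ≤ i → i + j ≤ (k : ℤ) → u i = u (i + j))

def G (N k : ℕ) (u : ℤ → V) (F : Set (ℤ → V)) : Set (ℤ → V) :=
  {t | nonper N k u ∧ t ∈ Cyl k u ∧ ∀ j ∈ badJ N, tr j t ∉ F}

def bigF (N k : ℕ) : List (ℤ → V) → Set (ℤ → V)
  | [] => ∅
  | u :: L => bigF N k L ∪ G N k u (bigF N k L)

lemma per_of (N k : ℕ) {u s : ℤ → V} {j : ℤ} (hj0 : 0 < j) (hjN : j < (N : ℤ))
    (hs : s ∈ Cyl k u) (hs' : tr j s ∈ Cyl k u) : ¬ nonper N k u := by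
  intro hnp
  apply hnp
  refine ⟨j.toNat, by omega, by omega, ?_⟩
  intro i hi hij
  have hj' : (j.toNat : ℤ) = j := Int.toNat_of_nonneg hj0.le
  rw [hj'] at hij ⊢
  have h1 : s (i + j) = u i := hs' i hi (by omega)
  have h2 : u (i + j) = s (i + j) := (hs (i + j) (by omega) (by omega)).symm
  rw [h2, h1]

lemma bigF_disj (N k : ℕ) (L : List (ℤ → V)) :
    ∀ j ∈ badJ N, ∀ t, t ∈ bigF N k L → tr j t ∉ bigF N k L := by
  induction L with
  | nil => intro j hj t ht; exact ht.elim
  | cons u L ih =>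
    intro j hj t ht htj
    have hjm := hj
    simp only [badJ, Finset.mem_erase, Finset.mem_Ioo] at hjm
    obtain ⟨hne, hlo, hhi⟩ := hjm
    have hjneg : -j ∈ badJ N := by
      simp only [badJ, Finset.mem_erase, Finset.mem_Ioo]; omega
    simp only [bigF, Set.mem_union] at ht htj
    rcases ht with ht | ht
    · rcases htj with htj | htj
      · exact ih j hj t ht htj
      · refine htj.2.2 (-j) hjneg ?_
        rw [tr_tr]
        have e : -j + j = 0 := by ring
        rw [e, tr_zero]; exact ht
    · rcases htj with htj | htj
      · exact ht.2.2 j hj htj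
      · obtain ⟨hnp, htc, -⟩ := ht
        obtain ⟨-, htjc, -⟩ := htj
        rcases lt_or_gt_of_ne hne with hneg | hpos
        · have h2 : tr (-j) (tr j t) ∈ Cyl k u := by
            rw [tr_tr]
            have e : -j + j = 0 := by ring
            rw [e, tr_zero]; exact htc
          exact per_of N k (by omega) (by omega) htjc h2 hnp
        · exact per_of N k hpos hhi htc htjc hnp

lemma bigF_cover (N k : ℕ) (L : List (ℤ → V)) :
    ∀ u ∈ L, nonper N k u → ∀ t ∈ Cyl k u,
      ∃ j : ℤ, (j = 0 ∨ j ∈ badJ N) ∧ tr j t ∈ bigF N k L := by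
  classical
  induction L with
  | nil => intro u hu; exact absurd hu List.not_mem_nil
  | cons v L ih =>
    intro u hu hnp t ht
    rcases List.mem_cons.mp hu with rfl | hu'
    · by_cases hb : ∃ j ∈ badJ N, tr j t ∈ bigF N k L
      · rcases hb with ⟨j, hj, hjt⟩
        refine ⟨j, Or.inr hj, ?_⟩
        simp only [bigF, Set.mem_union]
        exact Or.inl hjt
      · refine ⟨0, Or.inl rfl, ?_⟩
        rw [tr_zero]
        simp only [bigF, Set.mem_union]
        exact Or.inr ⟨hnp, ht, fun j hj hjt => hb ⟨j, hj, hjt⟩⟩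
    · rcases ih u hu' hnp t ht with ⟨j, hj, hjt⟩
      refine ⟨j, hj, ?_⟩
      simp only [bigF, Set.mem_union]
      exact Or.inl hjt

lemma tr_continuous [TopologicalSpace V] (z : ℤ) :
    Continuous (tr z : (ℤ → V) → (ℤ → V)) :=
  continuous_pi fun i => continuous_apply (i + z)

lemma bigF_clopen [TopologicalSpace V] [DiscreteTopology V] (N k : ℕ)
    (L : List (ℤ → V)) : IsClopen (bigF N k L : Set (ℤ → V)) := by
  classical
  induction L with
  | nil => simp only [bigF]; exact isClopen_empty
  | cons u L ih =>
    simp only [bigF]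
    refine IsClopen.union ih ?_
    by_cases hnp : nonper N k u
    · have hG : G N k u (bigF N k L) =
          (⋂ i ∈ Finset.Icc (-(k : ℤ)) (k : ℤ), (fun t : ℤ → V => t i) ⁻¹' {u i}) ∩
          ⋂ j ∈ badJ N, (tr j) ⁻¹' (bigF N k L)ᶜ := by
        ext t
        simp only [G, Cyl, Set.mem_setOf_eq, hnp, true_and, Set.mem_inter_iff,
          Set.mem_iInter, Set.mem_preimage, Set.mem_singleton_iff, Set.mem_compl_iff,
          Finset.mem_Icc, and_imp]
      rw [hG]
      refine IsClopen.inter ?_ ?_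
      · exact isClopen_biInter_finset fun i _ =>
          (isClopen_discrete _).preimage (continuous_apply i)
      · exact isClopen_biInter_finset fun j _ =>
          (ih.compl).preimage (tr_continuous j)
    · have hG : G N k u (bigF N k L) = ∅ := by
        ext t; simp [G, hnp]
      rw [hG]; exact isClopen_empty

end MarkerAux

open MarkerAux

/-- Krieger's Marker Lemma (Boyle (2.2)): given `k > N > 1`, a two-sided subshift
`Λ` admits a clopen set `F` such that `σ^l(F)`, `0 ≤ l < N`, are pairwise disjoint,
and every `t ∈ Λ` whose central `(2k+1)`-word is not `j`-periodic for any
`1 ≤ j < N` lies in `⋃_{-N < l < N} σ^l(F)`. -/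
theorem stmt_14 {V : Type*} [Fintype V] [TopologicalSpace V] [DiscreteTopology V]
    (Λ : Set (ℤ → V)) (hclosed : IsClosed Λ)
    (hinv : (shiftE V) '' Λ = Λ)
    (N k : ℕ) (hN : 1 < N) (hk : N < k) :
    ∃ F : Set (ℤ → V), F ⊆ Λ ∧ IsClopen (Subtype.val ⁻¹' F : Set Λ) ∧
      (∀ l m : ℕ, l < N → m < N → l ≠ m →
        Disjoint ((shiftE V ^ (l : ℤ)) '' F) ((shiftE V ^ (m : ℤ)) '' F)) ∧
      (∀ t ∈ Λ,
        ¬ (∃ j : ℕ, 1 ≤ j ∧ j < N ∧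
            ∀ i : ℤ, -(k : ℤ) ≤ i → i + j ≤ (k : ℤ) → t i = t (i + j)) →
        ∃ l : ℤ, -(N : ℤ) < l ∧ l < (N : ℤ) ∧ t ∈ (shiftE V ^ l) '' F) := by
  classical
  rcases isEmpty_or_nonempty V with hV | hV
  · refine ⟨∅, by simp, ?_, ?_, ?_⟩
    · rw [Set.preimage_empty]; exact isClopen_empty
    · intro l m _ _ _; simp
    · intro t ht _; exact (hV.elim (t 0))
  · obtain ⟨v0⟩ := hV
    set W : Finset ℤ := Finset.Icc (-(k : ℤ)) (k : ℤ) with hW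
    let ex : ({ x : ℤ // x ∈ W } → V) → (ℤ → V) :=
      fun w i => if h : i ∈ W then w ⟨i, h⟩ else v0
    let L : List (ℤ → V) :=
      (Finset.univ : Finset ({ x : ℤ // x ∈ W } → V)).toList.map ex
    refine ⟨bigF N k L ∩ Λ, Set.inter_subset_right, ?_, ?_, ?_⟩
    · have h1 : (Subtype.val ⁻¹' (bigF N k L ∩ Λ) : Set Λ)
          = Subtype.val ⁻¹' (bigF N k L) := by
        ext x; simp [x.2]
      rw [h1]
      exact (bigF_clopen N k L).preimage continuous_subtype_val
    · intro l m hl hm hlm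
      rw [Set.disjoint_left]
      intro t h1 h2
      rw [image_zpow] at h1 h2
      have h1' : tr (-(l : ℤ)) t ∈ bigF N k L := h1.1
      have h2' : tr (-(m : ℤ)) t ∈ bigF N k L := h2.1
      have hj : ((l : ℤ) - m) ∈ badJ N := by
        simp only [badJ, Finset.mem_erase, Finset.mem_Ioo]; omega
      refine bigF_disj N k L ((l : ℤ) - m) hj _ h1' ?_
      rw [tr_tr]
      have e : (l : ℤ) - m + -(l : ℤ) = -(m : ℤ) := by ring
      rw [e]; exact h2'
    · intro t ht hnp
      let w : { x : ℤ // x ∈ W } → V := fun i => t i.1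
      have huL : ex w ∈ L :=
        List.mem_map.mpr ⟨w, Finset.mem_toList.mpr (Finset.mem_univ w), rfl⟩
      have hagree : ∀ i : ℤ, -(k : ℤ) ≤ i → i ≤ (k : ℤ) → ex w i = t i := by
        intro i hi1 hi2
        have hi : i ∈ W := by rw [hW]; exact Finset.mem_Icc.mpr ⟨hi1, hi2⟩
        simp only [ex, dif_pos hi, w]
      have htc : t ∈ Cyl k (ex w) := fun i h1 h2 => (hagree i h1 h2).symm
      have hnpu : nonper N k (ex w) := by
        rintro ⟨j, hj1, hjN, hper⟩
        apply hnp
        refine ⟨j, hj1, hjN, fun i h1 h2 => ?_⟩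
        have e1 : t i = ex w i := (hagree i h1 (by omega)).symm
        have e2 : t (i + j) = ex w (i + j) := (hagree _ (by omega) h2).symm
        rw [e1, e2]; exact hper i h1 h2
      obtain ⟨j, hj, hjt⟩ := bigF_cover N k L (ex w) huL hnpu t htc
      have hb : -(N : ℤ) < -j ∧ -j < (N : ℤ) := by
        rcases hj with rfl | hj
        · constructor <;> omega
        · simp only [badJ, Finset.mem_erase, Finset.mem_Ioo] at hj; omega
      refine ⟨-j, hb.1, hb.2, ?_⟩
      rw [image_zpow, Set.mem_preimage, neg_neg]
      exact ⟨hjt, mem_tr hinv j ht⟩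
end
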